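/- arXiv:1803.09192 — 4 statements merged into one kernel-verified Lean document; each statement's English description precedes it below -/
import Mathlib

section
/- Let H be a finite-dimensional real inner product space, A self-adjoint with orthonormal eigenvectors u_1,...,u_N spanning M (eigenvalues λ_1,...,λ_N), and suppose μ, ν ∈ ℝ with μ ≠ λ_j for all j. If û = (ν - μ)(A - μI)^{-1} u for some unit vector u ∈ H, and E denotes orthogonal projection onto M, then ‖û‖ ≥ (1 - max_j |ν - λ_j|/|λ_j - μ|) · ‖Eu‖, provided max_j |ν - λ_j|/|λ_j - μ| ≤ 1. -/
/-!
In the eigenbasis, the coefficients `c j = ⟪uu j, u⟫` and `d j = ⟪uu j, uhat⟫` satisfy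
`(λⱼ - μ) d j = (ν - μ) c j`, hence `|d j - c j| ≤ ρ |c j|` with `ρ` the maximum in the statement.
Since `E` is the orthogonal projection, `E w = ∑ j, ⟪uu j, w⟫ • uu j`, so `‖E uhat - E u‖ ≤ ρ ‖E u‖`,
and the claim follows from `‖E uhat‖ ≤ ‖uhat‖` and the triangle inequality.
-/

open RealInnerProductSpace

namespace Orthonormal

open scoped InnerProductSpace

variable {𝕜 ι E : Type*} [RCLike 𝕜] [Fintype ι] [NormedAddCommGroup E] [InnerProductSpace 𝕜 E]
  {v : ι → E}

theorem norm_sum_smul_sq (hv : Orthonormal 𝕜 v) (l : ι → 𝕜) :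
    ‖∑ i, l i • v i‖ ^ 2 = ∑ i, ‖l i‖ ^ 2 := by
  rw [← RCLike.ofReal_inj (K := 𝕜), RCLike.ofReal_pow, ← inner_self_eq_norm_sq_to_K, hv.inner_sum,
    RCLike.ofReal_sum]
  simp only [RCLike.conj_mul, RCLike.ofReal_pow]

theorem norm_sum_smul_le_of_norm_le (hv : Orthonormal 𝕜 v) {a b : ι → 𝕜} {ρ : ℝ} (hρ : 0 ≤ ρ)
    (hab : ∀ i, ‖a i‖ ≤ ρ * ‖b i‖) : ‖∑ i, a i • v i‖ ≤ ρ * ‖∑ i, b i • v i‖ := by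
  refine (pow_le_pow_iff_left₀ (norm_nonneg _) (by positivity) two_ne_zero).mp ?_
  rw [mul_pow, hv.norm_sum_smul_sq, hv.norm_sum_smul_sq, Finset.mul_sum]
  gcongr with i
  calc ‖a i‖ ^ 2 ≤ (ρ * ‖b i‖) ^ 2 := by gcongr; exact hab i
    _ = ρ ^ 2 * ‖b i‖ ^ 2 := mul_pow ..

theorem starProjection_span_eq_sum (hv : Orthonormal 𝕜 v)
    [(Submodule.span 𝕜 (Set.range v)).HasOrthogonalProjection] (w : E) :
    (Submodule.span 𝕜 (Set.range v)).starProjection w = ∑ i, ⟪v i, w⟫_𝕜 • v i := by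
  refine Submodule.eq_starProjection_of_mem_of_inner_eq_zero
    (Submodule.sum_mem _ fun i _ => Submodule.smul_mem _ _ (Submodule.subset_span ⟨i, rfl⟩))
    fun k hk => inner_eq_zero_symm.mp ?_
  have hortho : Submodule.span 𝕜 (Set.range v) ⟂ Submodule.span 𝕜 {w - ∑ i, ⟪v i, w⟫_𝕜 • v i} := by
    rw [Submodule.isOrtho_span]
    rintro _ ⟨i, rfl⟩ _ rfl
    rw [inner_sub_right, hv.inner_right_fintype, sub_self]
  exact hortho.inner_eq hk (Submodule.subset_span rfl)

end Orthonormal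

theorem LinearMap.IsSymmetric.inner_sub_smul_apply_of_apply_eq_smul {E : Type*}
    [NormedAddCommGroup E] [InnerProductSpace ℝ E] {A : E →ₗ[ℝ] E} (hA : A.IsSymmetric)
    {x : E} {lam : ℝ} (hx : A x = lam • x) (μ : ℝ) (y : E) :
    ⟪x, (A - μ • (LinearMap.id : E →ₗ[ℝ] E)) y⟫ = (lam - μ) * ⟪x, y⟫ := by
  rw [LinearMap.sub_apply, inner_sub_right, ← hA, hx, LinearMap.smul_apply, LinearMap.id_apply,
    real_inner_smul_left, real_inner_smul_right, sub_mul]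

theorem abs_sub_eq_div_mul_abs_of_mul_eq {lam μ ν c d : ℝ} (hlam : lam ≠ μ)
    (h : (lam - μ) * d = (ν - μ) * c) : |d - c| = |ν - lam| / |lam - μ| * |c| := by
  have hrel : (lam - μ) * (d - c) = (ν - lam) * c := by linear_combination h
  rw [div_mul_eq_mul_div, eq_div_iff (abs_ne_zero.mpr (sub_ne_zero.mpr hlam)), ← abs_mul, ← abs_mul,
    mul_comm, hrel]

theorem stmt_4_general {H : Type*} [NormedAddCommGroup H] [InnerProductSpace ℝ H]
    (A : H →ₗ[ℝ] H) (hA : ∀ x y, ⟪A x, y⟫ = ⟪x, A y⟫)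
    (N : ℕ) (hN : 0 < N) (uu : Fin N → H) (lam : Fin N → ℝ)
    (h_orth : Orthonormal ℝ uu)
    (h_eig : ∀ j, A (uu j) = lam j • uu j)
    (μ ν : ℝ) (hμ : ∀ j, lam j ≠ μ)
    (E : H →ₗ[ℝ] H)
    (hE_mem : ∀ w, E w ∈ Submodule.span ℝ (Set.range uu))
    (hE_orth : ∀ w, ∀ m ∈ Submodule.span ℝ (Set.range uu), ⟪w - E w, m⟫ = 0)
    (u uhat : H)
    (huhat : (A - μ • (LinearMap.id : H →ₗ[ℝ] H)) uhat = (ν - μ) • u) :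
    haveI : Nonempty (Fin N) := Fin.pos_iff_nonempty.mp hN
    (Finset.univ.sup' Finset.univ_nonempty fun j => |ν - lam j| / |lam j - μ|) ≤ 1 →
    (1 - Finset.univ.sup' Finset.univ_nonempty fun j => |ν - lam j| / |lam j - μ|) * ‖E u‖
      ≤ ‖uhat‖ := by
  have : Nonempty (Fin N) := Fin.pos_iff_nonempty.mp hN
  intro _
  set ρ := Finset.univ.sup' Finset.univ_nonempty fun j => |ν - lam j| / |lam j - μ|
  set K := Submodule.span ℝ (Set.range uu)
  have : FiniteDimensional ℝ K := FiniteDimensional.span_of_finite ℝ (Set.finite_range uu)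
  have hE : ∀ w, E w = K.starProjection w := fun w =>
    (K.eq_starProjection_of_mem_of_inner_eq_zero (hE_mem w) (hE_orth w)).symm
  have hE_sum : ∀ w, E w = ∑ j, ⟪uu j, w⟫ • uu j := fun w => by
    rw [hE, h_orth.starProjection_span_eq_sum]
  have hρ : 0 ≤ ρ := Finset.le_sup'_of_le _ (Finset.mem_univ ⟨0, hN⟩) (by positivity)
  have hcoeff : ∀ j, |⟪uu j, uhat⟫ - ⟪uu j, u⟫| ≤ ρ * |⟪uu j, u⟫| := fun j => by
    have hrel : (lam j - μ) * ⟪uu j, uhat⟫ = (ν - μ) * ⟪uu j, u⟫ := by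
      rw [← LinearMap.IsSymmetric.inner_sub_smul_apply_of_apply_eq_smul hA (h_eig j), huhat,
        real_inner_smul_right]
    rw [abs_sub_eq_div_mul_abs_of_mul_eq (hμ j) hrel]
    gcongr
    exact Finset.le_sup' (fun j => |ν - lam j| / |lam j - μ|) (Finset.mem_univ j)
  have hdiff : ‖E uhat - E u‖ ≤ ρ * ‖E u‖ := by
    simp only [hE_sum, ← Finset.sum_sub_distrib, ← sub_smul]
    exact h_orth.norm_sum_smul_le_of_norm_le hρ hcoeff
  calc (1 - ρ) * ‖E u‖ ≤ ‖E u‖ - ‖E uhat - E u‖ := by linarith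
    _ ≤ ‖E uhat‖ := by linarith [norm_sub_norm_le (E u) (E uhat), norm_sub_rev (E u) (E uhat)]
    _ ≤ ‖uhat‖ := by rw [hE]; exact K.norm_starProjection_apply_le uhat

theorem stmt_4 {H : Type*} [NormedAddCommGroup H] [InnerProductSpace ℝ H]
    [FiniteDimensional ℝ H]
    (A : H →ₗ[ℝ] H) (hA : ∀ x y, ⟪A x, y⟫ = ⟪x, A y⟫)
    (N : ℕ) (hN : 0 < N) (uu : Fin N → H) (lam : Fin N → ℝ)
    (h_orth : Orthonormal ℝ uu)
    (h_eig : ∀ j, A (uu j) = lam j • uu j)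
    (μ ν : ℝ) (hμ : ∀ j, lam j ≠ μ)
    (hμ' : ¬ Module.End.HasEigenvalue A μ)
    (E : H →ₗ[ℝ] H)
    (hE_mem : ∀ w, E w ∈ Submodule.span ℝ (Set.range uu))
    (hE_orth : ∀ w, ∀ m ∈ Submodule.span ℝ (Set.range uu), ⟪w - E w, m⟫ = 0)
    (u uhat : H) (hu : ‖u‖ = 1)
    (huhat : (A - μ • (LinearMap.id : H →ₗ[ℝ] H)) uhat = (ν - μ) • u) :
    haveI : Nonempty (Fin N) := Fin.pos_iff_nonempty.mp hN
    (Finset.univ.sup' Finset.univ_nonempty fun j => |ν - lam j| / |lam j - μ|) ≤ 1 →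
    (1 - Finset.univ.sup' Finset.univ_nonempty fun j => |ν - lam j| / |lam j - μ|) * ‖E u‖
      ≤ ‖uhat‖ :=
  stmt_4_general A hA N hN uu lam h_orth h_eig μ ν hμ E hE_mem hE_orth u uhat huhat
end

section
/- Let H be a real inner product space with symmetric bilinear forms a and b, where a(u,u) = λ b(u,u) with b(u,u)=1 for an exact eigenpair (λ, u) satisfying a(u,v) = λ b(u,v) for all v, and let (λ_h, u_h) satisfy a_w(u_h, u_h) = λ_h with b_w(u_h,u_h) = 1 in a discrete space. Then for any v in the discrete space, the identity λ - λ_h = ‖Δu - Δ_w u_h‖² + s(u_h - v, u_h - v) - λ_h ‖u_0 - v_0‖² - λ_h(‖u_0‖² - ‖v_0‖²) + 2(Δu - Δ_w v, Δ_w u_h) - s(v,v) holds, where a_w(w,z) = (Δ_w w, Δ_w z) + s(w,z) and b_w(w,z) = (w_0, z_0). -/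
/-!
With `c := a_w - λ_h b_w`, the discrete eigenpair says `c u_h = 0`, so for a symmetric `c` the
quadratic form of `c` takes the same value at `u_h - v` and at `v`. Written out, this trades
`s(u_h - v, u_h - v) - λ_h ‖u_0 - v_0‖²` for `a_w(v, v) - λ_h ‖v_0‖² - ‖Δ_w (u_h - v)‖²`; the rest is
the expansion of `‖Δu - Δ_w u_h‖²` together with `‖Δu‖² = λ` and `‖u_0‖ = 1`.
-/

open RealInnerProductSpace

theorem LinearMap.BilinForm.apply_sub_sub_eq_of_apply_eq_zero {R M : Type*} [CommRing R]
    [AddCommGroup M] [Module R M] (c : LinearMap.BilinForm R M) (hc : ∀ x y, c x y = c y x)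
    {w : M} (hw : c w = 0) (v : M) :
    c (w - v) (w - v) = c v v := by
  simp [hw, hc v w]

theorem stmt_13 {H₀ : Type*} [NormedAddCommGroup H₀] [InnerProductSpace ℝ H₀]
    {Vh : Type*} [AddCommGroup Vh] [Module ℝ Vh]
    (Δu : H₀) (Δw P0 : Vh →ₗ[ℝ] H₀)
    (s : LinearMap.BilinForm ℝ Vh) (hs_symm : ∀ x y, s x y = s y x)
    (lam lamh : ℝ) (uh v : Vh)
    (hlam : ⟪Δu, Δu⟫ = lam)
    (hnorm : ⟪P0 uh, P0 uh⟫ = 1)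
    (heig : ∀ z : Vh, ⟪Δw uh, Δw z⟫ + s uh z = lamh * ⟪P0 uh, P0 z⟫) :
    lam - lamh
      = ⟪Δu - Δw uh, Δu - Δw uh⟫ + s (uh - v) (uh - v)
        - lamh * ⟪P0 uh - P0 v, P0 uh - P0 v⟫
        - lamh * (⟪P0 uh, P0 uh⟫ - ⟪P0 v, P0 v⟫)
        + 2 * ⟪Δu - Δw v, Δw uh⟫ - s v v := by
  set c : LinearMap.BilinForm ℝ Vh :=
    (innerₗ H₀).compl₁₂ Δw Δw + s - lamh • (innerₗ H₀).compl₁₂ P0 P0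
  have hc_apply : ∀ x y, c x y = ⟪Δw x, Δw y⟫ + s x y - lamh * ⟪P0 x, P0 y⟫ := fun _ _ => rfl
  have hc_symm : ∀ x y, c x y = c y x := by
    intro x y
    rw [hc_apply, hc_apply, real_inner_comm (Δw x), real_inner_comm (P0 x), hs_symm]
  have hc_uh : c uh = 0 := by
    ext z
    rw [hc_apply, heig, sub_self, LinearMap.zero_apply]
  have hc_shift := c.apply_sub_sub_eq_of_apply_eq_zero hc_symm hc_uh v
  rw [hc_apply, hc_apply] at hc_shift
  simp only [map_sub, LinearMap.sub_apply, inner_sub_left, inner_sub_right] at hc_shift ⊢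
  rw [real_inner_comm (Δw uh) (Δw v)] at hc_shift
  rw [real_inner_comm (Δw uh) Δu, real_inner_comm (Δw uh) (Δw v)]
  linear_combination -hlam - hc_shift + lamh * hnorm
end

section
/- Let H be a finite-dimensional real vector space with two symmetric positive-definite bilinear forms a_w and b_w such that b_w(v,v) ≤ C² a_w(v,v) for all v ∈ H (discrete Poincaré). Let M ⊆ H be a subspace and μ ∈ ℝ such that a_w(v,v) - μ b_w(v,v) ≥ C_ρ a_w(v,v) for all v in the b_w-orthogonal complement M^⊥ of M, with C_ρ > 0. If v̂ ∈ M^⊥ satisfies a_w(v̂, z) - μ b_w(v̂, z) = β b_w(g, z) for all z ∈ M^⊥ for some g ∈ H and β ∈ ℝ, then √(a_w(v̂,v̂)) ≤ C_ρ^{-1} C |β| √(b_w(g,g)). -/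
/-!
Testing the variational equation with `z = v̂` and using coercivity on `M^⊥` gives
`C_ρ a_w(v̂,v̂) ≤ β b_w(g,v̂)`. Cauchy–Schwarz for `b_w` and the Poincaré inequality
bound the right-hand side by `C |β| ‖g‖_b ‖v̂‖_a`, and dividing by `‖v̂‖_a = √(a_w(v̂,v̂))`
gives the claim.
-/

namespace LinearMap.BilinForm

theorem abs_apply_le_sqrt_mul_sqrt {M : Type*} [AddCommGroup M] [Module ℝ M]
    (B : LinearMap.BilinForm ℝ M) (hs : ∀ x, 0 ≤ B x x) (hB : B.IsSymm) (x y : M) :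
    |B x y| ≤ √(B x x) * √(B y y) := by
  rw [← Real.sqrt_mul (hs x)]
  exact Real.abs_le_sqrt (B.apply_sq_le_of_symm hs (isSymm_iff.mp hB) x y)

end LinearMap.BilinForm

theorem Real.sqrt_le_mul_sqrt_of_le_sq_mul {a b c : ℝ} (hc : 0 ≤ c) (h : b ≤ c ^ 2 * a) :
    √b ≤ c * √a :=
  calc √b ≤ √(c ^ 2 * a) := Real.sqrt_le_sqrt h
    _ = c * √a := by rw [Real.sqrt_mul (sq_nonneg c), Real.sqrt_sq hc]

theorem Real.sqrt_le_inv_mul_of_mul_le_mul_sqrt {a c k : ℝ} (hc : 0 < c) (hk : 0 ≤ k)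
    (h : c * a ≤ k * √a) : √a ≤ c⁻¹ * k := by
  rcases le_or_gt a 0 with ha | ha
  · rw [Real.sqrt_eq_zero_of_nonpos ha]
    positivity
  · have hsa : 0 < √a := Real.sqrt_pos.mpr ha
    rw [le_inv_mul_iff₀ hc]
    have : c * √a * √a ≤ k * √a := by rwa [mul_assoc, Real.mul_self_sqrt ha.le]
    exact le_of_mul_le_mul_right this hsa

theorem stmt_17_general {H : Type*} [AddCommGroup H] [Module ℝ H]
    (aw bw : LinearMap.BilinForm ℝ H)
    (hbw_symm : ∀ v w, bw v w = bw w v)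
    (hbw_pos : ∀ v, v ≠ 0 → 0 < bw v v)
    (C : ℝ) (hC : 0 < C) (hPoincare : ∀ v, bw v v ≤ C^2 * aw v v)
    (M : Submodule ℝ H) (μ Cρ : ℝ) (hCρ : 0 < Cρ)
    (hcoer : ∀ v, (∀ m ∈ M, bw v m = 0) → Cρ * aw v v ≤ aw v v - μ * bw v v)
    (vhat g : H) (β : ℝ)
    (hvhat_perp : ∀ m ∈ M, bw vhat m = 0)
    (hvar : ∀ z, (∀ m ∈ M, bw z m = 0) → aw vhat z - μ * bw vhat z = β * bw g z) :
    Real.sqrt (aw vhat vhat) ≤ Cρ⁻¹ * C * |β| * Real.sqrt (bw g g) := by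
  have hbw_nonneg (v : H) : 0 ≤ bw v v := by
    rcases eq_or_ne v 0 with rfl | hv
    · simp
    · exact (hbw_pos v hv).le
  have hcs := bw.abs_apply_le_sqrt_mul_sqrt hbw_nonneg ⟨hbw_symm⟩ g vhat
  have hpoincare_vhat : √(bw vhat vhat) ≤ C * √(aw vhat vhat) :=
    Real.sqrt_le_mul_sqrt_of_le_sq_mul hC.le (hPoincare vhat)
  have henergy : Cρ * aw vhat vhat ≤ β * bw g vhat := by
    linarith [hcoer vhat hvhat_perp, hvar vhat hvhat_perp]
  rw [mul_assoc, mul_assoc]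
  refine Real.sqrt_le_inv_mul_of_mul_le_mul_sqrt hCρ (by positivity) ?_
  calc Cρ * aw vhat vhat ≤ |β| * |bw g vhat| :=
        henergy.trans ((le_abs_self _).trans_eq (abs_mul _ _))
    _ ≤ |β| * (√(bw g g) * (C * √(aw vhat vhat))) := by gcongr; exact hcs.trans (by gcongr)
    _ = C * (|β| * √(bw g g)) * √(aw vhat vhat) := by ring

theorem stmt_17 {H : Type*} [AddCommGroup H] [Module ℝ H] [FiniteDimensional ℝ H]
    (aw bw : LinearMap.BilinForm ℝ H)
    (haw_symm : ∀ v w, aw v w = aw w v) (hbw_symm : ∀ v w, bw v w = bw w v)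
    (haw_pos : ∀ v, v ≠ 0 → 0 < aw v v) (hbw_pos : ∀ v, v ≠ 0 → 0 < bw v v)
    (C : ℝ) (hC : 0 < C) (hPoincare : ∀ v, bw v v ≤ C^2 * aw v v)
    (M : Submodule ℝ H) (μ Cρ : ℝ) (hCρ : 0 < Cρ)
    (hcoer : ∀ v, (∀ m ∈ M, bw v m = 0) → Cρ * aw v v ≤ aw v v - μ * bw v v)
    (vhat g : H) (β : ℝ)
    (hvhat_perp : ∀ m ∈ M, bw vhat m = 0)
    (hvar : ∀ z, (∀ m ∈ M, bw z m = 0) → aw vhat z - μ * bw vhat z = β * bw g z) :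
    Real.sqrt (aw vhat vhat) ≤ Cρ⁻¹ * C * |β| * Real.sqrt (bw g g) :=
  stmt_17_general aw bw hbw_symm hbw_pos C hC hPoincare M μ Cρ hCρ hcoer vhat g β hvhat_perp hvar
end

section
/- Let H be a real inner product space and T, T_h : H → H be self-adjoint bounded linear operators with T compact. If ‖T - T_h‖ → 0 as h → 0 (in operator norm) and μ ≠ 0 is an eigenvalue of T, then every disk around μ in the complex plane excluding the rest of σ(T) contains, for h small enough, eigenvalues of T_h; in the finite-dimensional self-adjoint case: for every ε > 0 there is δ > 0 such that ‖T - T_h‖ < δ implies that T_h has an eigenvalue μ_h with |μ - μ_h| < ε. -/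
/-!
Expanding `x` in an orthonormal eigenbasis of a self-adjoint `S` with coefficients `cᵢ` gives
`‖S x - μ x‖² = ∑ (λᵢ - μ)² ‖cᵢ‖² ≥ minᵢ (λᵢ - μ)² ‖x‖²`. If `x ≠ 0` is an eigenvector of `T` for `μ`,
then `S x - μ x = (S - T) x` has norm at most `‖T - S‖ ‖x‖`, so some eigenvalue of `S` lies within
`‖T - S‖` of `μ`; hence `δ = ε` works.
-/

open RealInnerProductSpace

namespace LinearMap.IsSymmetric

variable {𝕜 E : Type*} [RCLike 𝕜] [NormedAddCommGroup E] [InnerProductSpace 𝕜 E]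
  [FiniteDimensional 𝕜 E] {S : E →ₗ[𝕜] E} {n : ℕ}

theorem eigenvectorBasis_repr_sub_smul_apply (hS : S.IsSymmetric) (hn : Module.finrank 𝕜 E = n)
    (μ : ℝ) (x : E) (i : Fin n) :
    (hS.eigenvectorBasis hn).repr (S x - (μ : 𝕜) • x) i =
      ((hS.eigenvalues hn i - μ : ℝ) : 𝕜) * (hS.eigenvectorBasis hn).repr x i := by
  rw [map_sub, map_smul, PiLp.sub_apply, PiLp.smul_apply, eigenvectorBasis_apply_self_apply,
    smul_eq_mul, RCLike.ofReal_sub, sub_mul]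

theorem exists_abs_eigenvalues_sub_mul_norm_le (hS : S.IsSymmetric) (hn : Module.finrank 𝕜 E = n)
    [NeZero n] (μ : ℝ) (x : E) :
    ∃ i, |hS.eigenvalues hn i - μ| * ‖x‖ ≤ ‖S x - (μ : 𝕜) • x‖ := by
  obtain ⟨i, -, hi⟩ := Finset.exists_min_image Finset.univ (fun j => |hS.eigenvalues hn j - μ|)
    Finset.univ_nonempty
  refine ⟨i, abs_le_of_sq_le_sq ?_ (norm_nonneg _) |>.trans' (le_abs_self _)⟩
  calc (|hS.eigenvalues hn i - μ| * ‖x‖) ^ 2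
      = ∑ j, |hS.eigenvalues hn i - μ| ^ 2 * ‖(hS.eigenvectorBasis hn).repr x j‖ ^ 2 := by
        rw [mul_pow, ← (hS.eigenvectorBasis hn).repr.norm_map, EuclideanSpace.norm_sq_eq,
          Finset.mul_sum]
    _ ≤ ∑ j, |hS.eigenvalues hn j - μ| ^ 2 * ‖(hS.eigenvectorBasis hn).repr x j‖ ^ 2 := by
        gcongr ∑ j, ?_ ^ 2 * _ with j
        exact hi j (Finset.mem_univ j)
    _ = ‖S x - (μ : 𝕜) • x‖ ^ 2 := by
        rw [← (hS.eigenvectorBasis hn).repr.norm_map, EuclideanSpace.norm_sq_eq]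
        simp only [eigenvectorBasis_repr_sub_smul_apply, norm_mul, RCLike.norm_ofReal, mul_pow]

end LinearMap.IsSymmetric

theorem ContinuousLinearMap.exists_hasEigenvalue_abs_sub_le_norm_sub {𝕜 E : Type*} [RCLike 𝕜]
    [NormedAddCommGroup E] [InnerProductSpace 𝕜 E] [FiniteDimensional 𝕜 E] {T S : E →L[𝕜] E}
    (hS : (S : E →ₗ[𝕜] E).IsSymmetric) {μ : ℝ} {x : E} (hx : x ≠ 0) (hTx : T x = (μ : 𝕜) • x) :
    ∃ ν : ℝ, Module.End.HasEigenvalue (S : E →ₗ[𝕜] E) ν ∧ |μ - ν| ≤ ‖T - S‖ := by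
  have : Nontrivial E := ⟨x, 0, hx⟩
  have : NeZero (Module.finrank 𝕜 E) := ⟨Module.finrank_pos.ne'⟩
  obtain ⟨i, hi⟩ := hS.exists_abs_eigenvalues_sub_mul_norm_le rfl μ x
  refine ⟨_, hS.hasEigenvalue_eigenvalues rfl i, ?_⟩
  have hdefect : ‖S x - (μ : 𝕜) • x‖ ≤ ‖T - S‖ * ‖x‖ := by
    rw [← hTx, ← norm_neg, neg_sub]
    exact (T - S).le_opNorm x
  rw [abs_sub_comm]
  exact le_of_mul_le_mul_right (hi.trans hdefect) (norm_pos_iff.2 hx)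

theorem stmt_19_general {H : Type*} [NormedAddCommGroup H] [InnerProductSpace ℝ H]
    [FiniteDimensional ℝ H]
    (T : H →L[ℝ] H)
    (μ : ℝ) (hμ : ∃ x : H, x ≠ 0 ∧ T x = μ • x) :
    ∀ ε > (0:ℝ), ∃ δ > (0:ℝ), ∀ Th : H →L[ℝ] H,
      (∀ x y, ⟪Th x, y⟫ = ⟪x, Th y⟫) → ‖T - Th‖ < δ →
      ∃ μh : ℝ, (∃ x : H, x ≠ 0 ∧ Th x = μh • x) ∧ |μ - μh| < ε := by
  obtain ⟨x, hx, hTx⟩ := hμ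
  intro ε hε
  refine ⟨ε, hε, fun Th hTh hnorm => ?_⟩
  obtain ⟨ν, hν, hdist⟩ := T.exists_hasEigenvalue_abs_sub_le_norm_sub (S := Th) hTh hx hTx
  obtain ⟨v, hv⟩ := hν.exists_hasEigenvector
  exact ⟨ν, ⟨v, hv.2, hv.apply_eq_smul⟩, hdist.trans_lt hnorm⟩

theorem stmt_19 {H : Type*} [NormedAddCommGroup H] [InnerProductSpace ℝ H]
    [FiniteDimensional ℝ H]
    (T : H →L[ℝ] H) (hT : ∀ x y, ⟪T x, y⟫ = ⟪x, T y⟫)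
    (μ : ℝ) (hμ : ∃ x : H, x ≠ 0 ∧ T x = μ • x) :
    ∀ ε > (0:ℝ), ∃ δ > (0:ℝ), ∀ Th : H →L[ℝ] H,
      (∀ x y, ⟪Th x, y⟫ = ⟪x, Th y⟫) → ‖T - Th‖ < δ →
      ∃ μh : ℝ, (∃ x : H, x ≠ 0 ∧ Th x = μh • x) ∧ |μ - μh| < ε :=
  stmt_19_general T μ hμ
end
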